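/- arXiv:1505.06183 — 3 statements merged into one kernel-verified Lean document; each statement's English description precedes it below -/
import Mathlib

section
/- Let n ∈ ℕ, γ ∈ (0,1) with n > 2γ, α = 1 + 2γ, and let ψ(ρ) = d₂ ρ^{-γ} K_γ(ρ) for ρ > 0, where d₂ = 2 Γ((n+2γ)/2)^{(n-2γ)/(4γ)} / Γ((n-2γ)/2)^{(n+2γ)/(4γ)}. Then for every η > 4γ + 1: ((η+1)/2 - α) ∫_0^∞ ψ'(ρ)² ρ^η dρ = ((η+1)/2) ∫_0^∞ ψ(ρ)² ρ^η dρ, and ∫_0^∞ ψ(ρ)² ρ^η dρ = (η - α)((η-1)/2) [1 + ((η+1)/2)((η+1)/2 - α)^{-1}]^{-1} ∫_0^∞ ψ(ρ)² ρ^{η-2} dρ (note (η+1)/2 - α > 0, so the expressions are well defined, and all four integrals are finite). -/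
open MeasureTheory Real Filter Topology

noncomputable section

/-- The modified Bessel function of the second kind `K_γ`. -/
def besselK (γ t : ℝ) : ℝ :=
  ∫ s in Set.Ioi (0 : ℝ), Real.exp (-t * Real.cosh s) * Real.cosh (γ * s)

/-- The constant `d₂`. -/
def dTwo (n : ℕ) (γ : ℝ) : ℝ :=
  2 * Real.Gamma (((n : ℝ) + 2 * γ) / 2) ^ (((n : ℝ) - 2 * γ) / (4 * γ)) /
    Real.Gamma (((n : ℝ) - 2 * γ) / 2) ^ (((n : ℝ) + 2 * γ) / (4 * γ))

/-- The function `ψ(ρ) = d₂ ρ^{-γ} K_γ(ρ)`. -/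
def psiK (n : ℕ) (γ : ℝ) : ℝ → ℝ := fun ρ => dTwo n γ * ρ ^ (-γ) * besselK γ ρ

/-!
The function `ψ` solves `ψ'' + (α / ρ) ψ' = ψ` with `α = 1 + 2γ`, and the integral representation
of `K_γ` gives `|ψ| ≲ ρ^(-2γ) e^(-ρ/2)` and `|ψ'| ≲ ρ^(-2γ-1) e^(-ρ/2)` on `(0, ∞)`: differentiating
under the integral sign, `K_γ' = -∫ e^(-ρ cosh s) cosh s cosh (γ s) ds`, the Bessel equation comes
from an integration by parts in `s`, and the substitution `u = e^s` bounds each of these integrals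
by a Gamma function. By the equation,
`((ψ'² - ψ²) ρ^(η+1) / 2)' = ((η+1)/2 - α) ψ'² ρ^η - (η+1)/2 ψ² ρ^η` and
`(ψ ψ' ρ^η - (η-α)/2 ψ² ρ^(η-1))' = ψ'² ρ^η + ψ² ρ^η - (η-α)(η-1)/2 ψ² ρ^(η-2)`.
For `η > 4γ + 1` the bracketed terms vanish at `0` and at `∞`, so both right-hand sides integrate
to zero; eliminating `∫ ψ'² ρ^η` gives the second identity.
-/

open Set

theorem integral_Ioi_of_hasDerivAt_of_tendsto_nhdsGT {E : Type*} [NormedAddCommGroup E]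
    [NormedSpace ℝ E] [CompleteSpace E] {f f' : ℝ → E} {a : ℝ} {l m : E}
    (hderiv : ∀ x ∈ Ioi a, HasDerivAt f (f' x) x) (f'int : IntegrableOn f' (Ioi a))
    (hbot : Tendsto f (𝓝[>] a) (𝓝 l)) (htop : Tendsto f atTop (𝓝 m)) :
    ∫ x in Ioi a, f' x = m - l := by
  classical
  have hupdate : ∀ x ∈ Ioi a, Function.update f a l x = f x := fun x hx =>
    Function.update_of_ne (ne_of_gt hx) _ _
  simpa using integral_Ioi_of_hasDerivAt_of_tendsto (f := Function.update f a l)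
    (continuousWithinAt_update_same.2 (by rwa [Ici_sdiff_left]))
    (fun x hx => (hderiv x hx).congr_of_eventuallyEq
      (eventually_of_mem (isOpen_Ioi.mem_nhds hx) hupdate))
    f'int (htop.congr' ((eventually_gt_atTop a).mono fun y hy => (hupdate y hy).symm))

lemma cosh_le_exp_of_nonneg {x : ℝ} (hx : 0 ≤ x) : cosh x ≤ exp x := by
  rw [cosh_eq]
  linarith [exp_le_exp.2 (neg_le_self hx)]

lemma exp_smul_rpow_mul_exp_neg_mul (a b s : ℝ) :
    exp s • (exp s ^ (b - 1) * exp (-(a * exp s))) = exp (b * s - a * exp s) := by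
  rw [smul_eq_mul, ← exp_mul, ← exp_add, ← exp_add]
  ring_nf

lemma integrableOn_rpow_sub_one_mul_exp_neg_mul {a b : ℝ} (ha : 0 < a) (hb : 0 < b) :
    IntegrableOn (fun u => u ^ (b - 1) * exp (-(a * u))) (Ioi 0) := by
  simpa using integrableOn_rpow_mul_exp_neg_mul_rpow (p := 1) (by linarith : -1 < b - 1) one_pos ha

lemma integrableOn_exp_mul_sub_mul_exp {a b : ℝ} (ha : 0 < a) (hb : 0 < b) :
    IntegrableOn (fun s => exp (b * s - a * exp s)) (Ioi 0) := by
  have := (integrableOn_comp_exp_Ioi _ 0).2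
    ((integrableOn_rpow_sub_one_mul_exp_neg_mul ha hb).mono_set (Ioi_subset_Ioi (exp_pos 0).le))
  simpa only [exp_smul_rpow_mul_exp_neg_mul] using this

lemma integral_exp_mul_sub_mul_exp_le {a b : ℝ} (ha : 0 < a) (hb : 0 < b) :
    ∫ s in Ioi 0, exp (b * s - a * exp s) ≤ (1 / a) ^ b * Gamma b := by
  simp_rw [← integral_rpow_mul_exp_neg_mul_Ioi hb ha, ← exp_smul_rpow_mul_exp_neg_mul a b,
    integral_comp_exp_Ioi (fun u => u ^ (b - 1) * exp (-(a * u))) 0, exp_zero]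
  refine setIntegral_mono_set (integrableOn_rpow_sub_one_mul_exp_neg_mul ha hb) ?_
    (Ioi_subset_Ioi zero_le_one).eventuallyLE
  filter_upwards [ae_restrict_mem measurableSet_Ioi] with u hu
  have : 0 < u := hu
  positivity

def besselKIntegrand (γ : ℝ) (m : ℕ) (ρ s : ℝ) : ℝ :=
  exp (-ρ * cosh s) * cosh s ^ m * cosh (γ * s)

/-- `besselKMoment γ m` is `(-1) ^ m` times the `m`-th derivative of `besselK γ`. -/
def besselKMoment (γ : ℝ) (m : ℕ) (ρ : ℝ) : ℝ :=
  ∫ s in Ioi 0, besselKIntegrand γ m ρ s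

lemma besselKMoment_zero (γ : ℝ) : besselKMoment γ 0 = besselK γ := by
  funext ρ
  simp [besselKMoment, besselKIntegrand, besselK]

lemma besselKIntegrand_nonneg (γ : ℝ) (m : ℕ) (ρ s : ℝ) : 0 ≤ besselKIntegrand γ m ρ s := by
  unfold besselKIntegrand
  positivity

lemma continuous_besselKIntegrand (γ : ℝ) (m : ℕ) (ρ : ℝ) :
    Continuous (besselKIntegrand γ m ρ) := by
  unfold besselKIntegrand
  fun_prop

lemma besselKIntegrand_le {γ ρ : ℝ} (m : ℕ) (hγ : 0 ≤ γ) (hρ : 0 ≤ ρ) {s : ℝ} (hs : 0 ≤ s) :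
    besselKIntegrand γ m ρ s ≤ exp (-(ρ / 2)) * exp ((m + γ) * s - ρ / 4 * exp s) := by
  have hcosh : ρ / 2 + ρ / 4 * exp s ≤ ρ * cosh s := by
    have h1 := mul_le_mul_of_nonneg_left (one_le_cosh s) hρ
    have h2 : exp s / 2 ≤ cosh s := by rw [cosh_eq]; linarith [exp_pos (-s)]
    linarith [mul_le_mul_of_nonneg_left h2 hρ]
  calc besselKIntegrand γ m ρ s
      ≤ exp (-(ρ / 2) - ρ / 4 * exp s) * exp s ^ m * exp (γ * s) := by
        unfold besselKIntegrand
        gcongr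
        · linarith
        · exact cosh_le_exp_of_nonneg hs
        · exact cosh_le_exp_of_nonneg (by positivity)
    _ = exp (-(ρ / 2)) * exp ((m + γ) * s - ρ / 4 * exp s) := by
        rw [← exp_nat_mul, ← exp_add, ← exp_add, ← exp_add]
        ring_nf

lemma integrableOn_besselKIntegrand {γ ρ : ℝ} (m : ℕ) (hγ : 0 < γ) (hρ : 0 < ρ) :
    IntegrableOn (besselKIntegrand γ m ρ) (Ioi 0) := by
  refine Integrable.mono' ((integrableOn_exp_mul_sub_mul_exp (a := ρ / 4) (b := m + γ)
    (by positivity) (by positivity)).const_mul (exp (-(ρ / 2))))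
    (continuous_besselKIntegrand γ m ρ).aestronglyMeasurable ?_
  filter_upwards [ae_restrict_mem measurableSet_Ioi] with s hs
  rw [norm_of_nonneg (besselKIntegrand_nonneg γ m ρ s)]
  exact besselKIntegrand_le m hγ.le hρ.le (le_of_lt hs)

lemma besselKMoment_nonneg (γ : ℝ) (m : ℕ) (ρ : ℝ) : 0 ≤ besselKMoment γ m ρ :=
  setIntegral_nonneg measurableSet_Ioi fun s _ => besselKIntegrand_nonneg γ m ρ s

lemma besselKMoment_le {γ ρ : ℝ} (m : ℕ) (hγ : 0 < γ) (hρ : 0 < ρ) :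
    besselKMoment γ m ρ ≤ 4 ^ (m + γ) * Gamma (m + γ) * (ρ ^ (-(m + γ)) * exp (-(1 / 2) * ρ)) :=
  calc besselKMoment γ m ρ
      ≤ ∫ s in Ioi 0, exp (-(ρ / 2)) * exp ((m + γ) * s - ρ / 4 * exp s) :=
        setIntegral_mono_on (integrableOn_besselKIntegrand m hγ hρ)
          ((integrableOn_exp_mul_sub_mul_exp (by positivity) (by positivity)).const_mul _)
          measurableSet_Ioi fun s hs => besselKIntegrand_le m hγ.le hρ.le (le_of_lt hs)
    _ ≤ exp (-(ρ / 2)) * ((1 / (ρ / 4)) ^ (m + γ) * Gamma (m + γ)) := by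
        rw [integral_const_mul]
        gcongr
        exact integral_exp_mul_sub_mul_exp_le (by positivity) (by positivity)
    _ = 4 ^ (m + γ) * Gamma (m + γ) * (ρ ^ (-(m + γ)) * exp (-(1 / 2) * ρ)) := by
        rw [one_div_div, div_rpow (by norm_num) hρ.le, rpow_neg hρ.le]
        ring_nf

lemma hasDerivAt_besselKMoment {γ ρ : ℝ} (m : ℕ) (hγ : 0 < γ) (hρ : 0 < ρ) :
    HasDerivAt (besselKMoment γ m) (-besselKMoment γ (m + 1) ρ) ρ := by
  have hderiv : ∀ s t, HasDerivAt (fun t => besselKIntegrand γ m t s)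
      (-besselKIntegrand γ (m + 1) t s) t := fun s t => by
    refine ((((hasDerivAt_neg t).mul_const (cosh s)).exp.mul_const (cosh s ^ m)).mul_const
      (cosh (γ * s))).congr_deriv ?_
    simp only [besselKIntegrand]
    ring
  have hdom : ∀ s, ∀ t ∈ Metric.ball ρ (ρ / 2),
      ‖-besselKIntegrand γ (m + 1) t s‖ ≤ besselKIntegrand γ (m + 1) (ρ / 2) s := by
    intro s t ht
    have ht' : ρ / 2 < t := by
      rw [Metric.mem_ball, dist_eq, abs_lt] at ht
      linarith
    rw [norm_neg, norm_of_nonneg (besselKIntegrand_nonneg γ (m + 1) t s)]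
    unfold besselKIntegrand
    gcongr
  have := hasDerivAt_integral_of_dominated_loc_of_deriv_le (μ := volume.restrict (Ioi 0))
    (Metric.ball_mem_nhds ρ (half_pos hρ))
    (Eventually.of_forall fun t => (continuous_besselKIntegrand γ m t).aestronglyMeasurable)
    (integrableOn_besselKIntegrand m hγ hρ)
    (continuous_besselKIntegrand γ (m + 1) ρ).neg.aestronglyMeasurable (ae_of_all _ hdom)
    (integrableOn_besselKIntegrand (m + 1) hγ (half_pos hρ))
    (ae_of_all _ fun s t _ => hderiv s t)
  unfold besselKMoment
  rw [← integral_neg]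
  exact this.2

lemma besselKMoment_bessel_eq {γ ρ : ℝ} (hγ : 0 < γ) (hρ : 0 < ρ) :
    ρ ^ 2 * besselKMoment γ 2 ρ =
      ρ * besselKMoment γ 1 ρ + (ρ ^ 2 + γ ^ 2) * besselKMoment γ 0 ρ := by
  set F : ℝ → ℝ := fun s => exp (-ρ * cosh s) * (ρ * sinh s * cosh (γ * s) + γ * sinh (γ * s))
  set G : ℝ → ℝ := fun s => ρ * besselKIntegrand γ 1 ρ s
    + (ρ ^ 2 + γ ^ 2) * besselKIntegrand γ 0 ρ s - ρ ^ 2 * besselKIntegrand γ 2 ρ s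
  -- `F' = G` by `sinh² = cosh² - 1`; `F 0 = 0`, and `F` is integrable, so it vanishes at infinity.
  have hF : ∀ s, HasDerivAt F (G s) s := fun s => by
    have hγs : HasDerivAt (γ * ·) γ s := by simpa using (hasDerivAt_id s).const_mul γ
    refine (((hasDerivAt_cosh s).const_mul (-ρ)).exp.mul
      ((((hasDerivAt_sinh s).const_mul ρ).mul hγs.cosh).add (hγs.sinh.const_mul γ))).congr_deriv ?_
    simp only [G, besselKIntegrand, Pi.add_apply, Pi.mul_apply]
    linear_combination (-(exp (-ρ * cosh s) * cosh (γ * s) * ρ ^ 2)) * sinh_sq s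
  have hI (m : ℕ) (c : ℝ) : IntegrableOn (fun s => c * besselKIntegrand γ m ρ s) (Ioi 0) :=
    (integrableOn_besselKIntegrand m hγ hρ).const_mul c
  have hI10 : IntegrableOn (fun s => ρ * besselKIntegrand γ 1 ρ s
      + (ρ ^ 2 + γ ^ 2) * besselKIntegrand γ 0 ρ s) (Ioi 0) := (hI 1 _).add (hI 0 _)
  have hGint : IntegrableOn G (Ioi 0) := hI10.sub (hI 2 _)
  have hFint : IntegrableOn F (Ioi 0) := by
    refine Integrable.mono' ((hI 1 ρ).add (hI 0 γ))
      (continuous_iff_continuousAt.2 fun s => (hF s).continuousAt).aestronglyMeasurable ?_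
    filter_upwards [ae_restrict_mem measurableSet_Ioi] with s hs
    have hs : 0 ≤ s := le_of_lt hs
    have := sinh_nonneg_iff.2 hs
    have := sinh_nonneg_iff.2 (mul_nonneg hγ.le hs)
    rw [norm_of_nonneg (by positivity)]
    calc exp (-ρ * cosh s) * (ρ * sinh s * cosh (γ * s) + γ * sinh (γ * s))
        ≤ exp (-ρ * cosh s) * (ρ * cosh s * cosh (γ * s) + γ * cosh (γ * s)) := by
          gcongr <;> exact (sinh_lt_cosh _).le
      _ = ρ * besselKIntegrand γ 1 ρ s + γ * besselKIntegrand γ 0 ρ s := by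
          simp only [besselKIntegrand]
          ring
  have hGzero := integral_Ioi_of_hasDerivAt_of_tendsto' (fun s _ => hF s) hGint
    (tendsto_zero_of_hasDerivAt_of_integrableOn_Ioi (fun s _ => hF s) hGint hFint)
  have hsplit : ∫ s in Ioi 0, G s = ρ * besselKMoment γ 1 ρ
      + (ρ ^ 2 + γ ^ 2) * besselKMoment γ 0 ρ - ρ ^ 2 * besselKMoment γ 2 ρ := by
    rw [integral_sub hI10 (hI 2 _), integral_add (hI 1 _) (hI 0 _), integral_const_mul,
      integral_const_mul, integral_const_mul]
    rfl
  simp only [hsplit, F, sinh_zero, mul_zero, zero_mul, add_zero, sub_zero] at hGzero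
  linarith

def IsRpowExpBounded (g : ℝ → ℝ) (a c : ℝ) : Prop :=
  ∃ C, ∀ ρ ∈ Ioi (0 : ℝ), |g ρ| ≤ C * (ρ ^ a * exp (-c * ρ))

lemma isRpowExpBounded_rpow (a : ℝ) : IsRpowExpBounded (fun ρ => ρ ^ a) a 0 :=
  ⟨1, fun ρ hρ => by simp [abs_of_pos (rpow_pos_of_pos hρ a)]⟩

namespace IsRpowExpBounded

variable {f g : ℝ → ℝ} {a b c d : ℝ}

lemma mul (hf : IsRpowExpBounded f a c) (hg : IsRpowExpBounded g b d) :
    IsRpowExpBounded (fun ρ => f ρ * g ρ) (a + b) (c + d) := by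
  obtain ⟨C, hC⟩ := hf
  obtain ⟨D, hD⟩ := hg
  refine ⟨C * D, fun ρ hρ => ?_⟩
  calc |f ρ * g ρ| ≤ C * (ρ ^ a * exp (-c * ρ)) * (D * (ρ ^ b * exp (-d * ρ))) := by
        rw [abs_mul]
        exact mul_le_mul (hC ρ hρ) (hD ρ hρ) (abs_nonneg _) ((abs_nonneg _).trans (hC ρ hρ))
    _ = C * D * (ρ ^ (a + b) * exp (-(c + d) * ρ)) := by
        rw [rpow_add hρ, neg_add, add_mul, exp_add]
        ring

lemma const_mul (hf : IsRpowExpBounded f a c) (k : ℝ) :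
    IsRpowExpBounded (fun ρ => k * f ρ) a c := by
  obtain ⟨C, hC⟩ := hf
  refine ⟨|k| * C, fun ρ hρ => ?_⟩
  rw [abs_mul, mul_assoc]
  exact mul_le_mul_of_nonneg_left (hC ρ hρ) (abs_nonneg k)

lemma add (hf : IsRpowExpBounded f a c) (hg : IsRpowExpBounded g a c) :
    IsRpowExpBounded (fun ρ => f ρ + g ρ) a c := by
  obtain ⟨C, hC⟩ := hf
  obtain ⟨D, hD⟩ := hg
  exact ⟨C + D, fun ρ hρ => (abs_add_le _ _).trans (by linarith [hC ρ hρ, hD ρ hρ])⟩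

lemma integrableOn (hf : IsRpowExpBounded f a c) (hcont : ContinuousOn f (Ioi 0))
    (ha : -1 < a) (hc : 0 < c) : IntegrableOn f (Ioi 0) := by
  obtain ⟨C, hC⟩ := hf
  refine Integrable.mono' ((by simpa using integrableOn_rpow_mul_exp_neg_mul_rpow ha one_pos hc :
    IntegrableOn (fun ρ => ρ ^ a * exp (-c * ρ)) (Ioi 0)).const_mul C)
    (hcont.aestronglyMeasurable measurableSet_Ioi) ?_
  filter_upwards [ae_restrict_mem measurableSet_Ioi] with ρ hρ
  exact hC ρ hρ

lemma tendsto_nhdsGT_zero (hf : IsRpowExpBounded f a c) (ha : 0 < a) :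
    Tendsto f (𝓝[>] 0) (𝓝 0) := by
  obtain ⟨C, hC⟩ := hf
  have hlim : Tendsto (fun ρ => C * (ρ ^ a * exp (-c * ρ))) (𝓝[>] 0) (𝓝 0) := by
    have : ContinuousAt (fun ρ => C * (ρ ^ a * exp (-c * ρ))) 0 :=
      continuousAt_const.mul (((continuousAt_id.rpow_const (Or.inr ha.le))).mul (by fun_prop))
    simpa [zero_rpow ha.ne'] using this.tendsto.mono_left nhdsWithin_le_nhds
  exact squeeze_zero_norm' (eventually_nhdsWithin_of_forall hC) hlim

lemma tendsto_atTop (hf : IsRpowExpBounded f a c) (hc : 0 < c) :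
    Tendsto f atTop (𝓝 0) := by
  obtain ⟨C, hC⟩ := hf
  refine squeeze_zero_norm' ((eventually_gt_atTop 0).mono hC) ?_
  simpa using (tendsto_rpow_mul_exp_neg_mul_atTop_nhds_zero a c hc).const_mul C

end IsRpowExpBounded

def psiKDeriv (n : ℕ) (γ ρ : ℝ) : ℝ :=
  -dTwo n γ * (γ * ρ ^ (-γ - 1) * besselKMoment γ 0 ρ + ρ ^ (-γ) * besselKMoment γ 1 ρ)

lemma psiK_eq_besselKMoment (n : ℕ) (γ ρ : ℝ) :
    psiK n γ ρ = dTwo n γ * ρ ^ (-γ) * besselKMoment γ 0 ρ := by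
  rw [besselKMoment_zero]
  rfl

section PsiK

variable (n : ℕ) {γ : ℝ}

lemma hasDerivAt_psiK (hγ : 0 < γ) {ρ : ℝ} (hρ : 0 < ρ) :
    HasDerivAt (psiK n γ) (psiKDeriv n γ ρ) ρ := by
  have h := ((hasDerivAt_rpow_const (p := -γ) (Or.inl hρ.ne')).const_mul (dTwo n γ)).mul
    (hasDerivAt_besselKMoment 0 hγ hρ)
  rw [funext (psiK_eq_besselKMoment n γ)]
  refine h.congr_deriv ?_
  simp only [psiKDeriv, zero_add]
  ring

lemma hasDerivAt_psiKDeriv (hγ : 0 < γ) {ρ : ℝ} (hρ : 0 < ρ) :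
    HasDerivAt (psiKDeriv n γ) (psiK n γ ρ - (1 + 2 * γ) / ρ * psiKDeriv n γ ρ) ρ := by
  have h := (((((hasDerivAt_rpow_const (p := -γ - 1) (Or.inl hρ.ne')).const_mul γ).mul
    (hasDerivAt_besselKMoment 0 hγ hρ)).add
    ((hasDerivAt_rpow_const (p := -γ) (Or.inl hρ.ne')).mul
    (hasDerivAt_besselKMoment 1 hγ hρ))).const_mul (-dTwo n γ))
  refine h.congr_deriv ?_
  have hK2 : besselKMoment γ 2 ρ = (ρ * besselKMoment γ 1 ρ
      + (ρ ^ 2 + γ ^ 2) * besselKMoment γ 0 ρ) / ρ ^ 2 := by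
    rw [← besselKMoment_bessel_eq hγ hρ]
    field_simp
  have e1 : ρ ^ (-γ - 1) = ρ ^ (-γ) / ρ := rpow_sub_one hρ.ne' _
  have e2 : ρ ^ (-γ - 1 - 1) = ρ ^ (-γ) / ρ / ρ := by rw [rpow_sub_one hρ.ne', e1]
  simp only [psiK_eq_besselKMoment, psiKDeriv, zero_add, Nat.reduceAdd, hK2, e1, e2]
  field_simp
  ring

lemma isRpowExpBounded_besselKMoment (m : ℕ) (hγ : 0 < γ) :
    IsRpowExpBounded (besselKMoment γ m) (-(m + γ)) (1 / 2) :=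
  ⟨_, fun ρ hρ => by
    rw [abs_of_nonneg (besselKMoment_nonneg γ m ρ)]
    exact besselKMoment_le m hγ hρ⟩

lemma isRpowExpBounded_psiK (hγ : 0 < γ) : IsRpowExpBounded (psiK n γ) (-(2 * γ)) (1 / 2) := by
  convert ((isRpowExpBounded_rpow (-γ)).mul (isRpowExpBounded_besselKMoment 0 hγ)).const_mul
    (dTwo n γ) using 1
  · exact funext fun ρ => by rw [psiK_eq_besselKMoment, mul_assoc]
  · push_cast
    ring
  · ring

lemma isRpowExpBounded_psiKDeriv (hγ : 0 < γ) :
    IsRpowExpBounded (psiKDeriv n γ) (-(2 * γ) - 1) (1 / 2) := by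
  have h0 := (((isRpowExpBounded_rpow (-γ - 1)).mul
    (isRpowExpBounded_besselKMoment 0 hγ)).const_mul γ)
  have h1 := (isRpowExpBounded_rpow (-γ)).mul (isRpowExpBounded_besselKMoment 1 hγ)
  convert (h0.add (by convert h1 using 1; push_cast; ring)).const_mul (-dTwo n γ) using 1
  · exact funext fun ρ => by simp only [psiKDeriv, mul_assoc]
  · push_cast
    ring
  · ring

end PsiK

section RadialIdentities

variable {f f' : ℝ → ℝ} {α a c η : ℝ}

lemma integrableOn_sq_mul_rpow {g : ℝ → ℝ} (hg : IsRpowExpBounded g a c)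
    (hcont : ContinuousOn g (Ioi 0)) (hc : 0 < c) {t : ℝ} (ht : -1 < 2 * a + t) :
    IntegrableOn (fun ρ => g ρ ^ 2 * ρ ^ t) (Ioi 0) := by
  refine ((((hg.mul hg).mul (isRpowExpBounded_rpow t)).integrableOn ?_ (by linarith)
    (by linarith)).congr_fun (fun ρ _ => by ring) measurableSet_Ioi)
  exact (hcont.mul hcont).mul (continuousOn_id.rpow_const fun x hx => Or.inl (ne_of_gt hx))

theorem integral_deriv_sq_mul_rpow_of_ode
    (hf : ∀ ρ ∈ Ioi 0, HasDerivAt f (f' ρ) ρ)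
    (hf' : ∀ ρ ∈ Ioi 0, HasDerivAt f' (f ρ - α / ρ * f' ρ) ρ)
    (hfb : IsRpowExpBounded f a c) (hf'b : IsRpowExpBounded f' (a - 1) c) (hc : 0 < c)
    (hη : 1 - 2 * a < η) :
    ((η + 1) / 2 - α) * ∫ ρ in Ioi 0, f' ρ ^ 2 * ρ ^ η =
      (η + 1) / 2 * ∫ ρ in Ioi 0, f ρ ^ 2 * ρ ^ η := by
  have hI1 := integrableOn_sq_mul_rpow hf'b
    (fun ρ hρ => (hf' ρ hρ).continuousAt.continuousWithinAt) hc (t := η) (by linarith)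
  have hI0 := integrableOn_sq_mul_rpow hfb
    (fun ρ hρ => (hf ρ hρ).continuousAt.continuousWithinAt) hc (t := η) (by linarith)
  set F := fun ρ => (f' ρ * f' ρ * ρ ^ (η + 1) - f ρ * f ρ * ρ ^ (η + 1)) / 2
  have hb1 := (hf'b.mul hf'b).mul (isRpowExpBounded_rpow (η + 1))
  have hb0 := (hfb.mul hfb).mul (isRpowExpBounded_rpow (η + 1))
  have hF0 : Tendsto F (𝓝[>] 0) (𝓝 0) := by
    simpa using ((hb1.tendsto_nhdsGT_zero (by linarith)).sub
      (hb0.tendsto_nhdsGT_zero (by linarith))).div_const 2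
  have hFtop : Tendsto F atTop (𝓝 0) := by
    simpa using ((hb1.tendsto_atTop (by linarith)).sub
      (hb0.tendsto_atTop (by linarith))).div_const 2
  have hF : ∀ ρ ∈ Ioi 0, HasDerivAt F
      (((η + 1) / 2 - α) * (f' ρ ^ 2 * ρ ^ η) - (η + 1) / 2 * (f ρ ^ 2 * ρ ^ η)) ρ := by
    intro ρ (hρ : 0 < ρ)
    have hr := hasDerivAt_rpow_const (x := ρ) (p := η + 1) (Or.inl hρ.ne')
    refine (((((hf' ρ hρ).mul (hf' ρ hρ)).mul hr).sub
      (((hf ρ hρ).mul (hf ρ hρ)).mul hr)).div_const 2).congr_deriv ?_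
    simp only [Pi.mul_apply, add_sub_cancel_right, rpow_add_one hρ.ne']
    field_simp
    ring
  have := integral_Ioi_of_hasDerivAt_of_tendsto_nhdsGT hF
    ((hI1.const_mul _).sub (hI0.const_mul _)) hF0 hFtop
  rw [integral_sub (hI1.const_mul _) (hI0.const_mul _), integral_const_mul,
    integral_const_mul] at this
  linarith

theorem integral_sq_mul_rpow_sub_two_of_ode
    (hf : ∀ ρ ∈ Ioi 0, HasDerivAt f (f' ρ) ρ)
    (hf' : ∀ ρ ∈ Ioi 0, HasDerivAt f' (f ρ - α / ρ * f' ρ) ρ)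
    (hfb : IsRpowExpBounded f a c) (hf'b : IsRpowExpBounded f' (a - 1) c) (hc : 0 < c)
    (hη : 1 - 2 * a < η) :
    (∫ ρ in Ioi 0, f' ρ ^ 2 * ρ ^ η) + ∫ ρ in Ioi 0, f ρ ^ 2 * ρ ^ η =
      (η - α) * ((η - 1) / 2) * ∫ ρ in Ioi 0, f ρ ^ 2 * ρ ^ (η - 2) := by
  have hcont : ContinuousOn f (Ioi 0) := fun ρ hρ => (hf ρ hρ).continuousAt.continuousWithinAt
  have hI1 := integrableOn_sq_mul_rpow hf'b
    (fun ρ hρ => (hf' ρ hρ).continuousAt.continuousWithinAt) hc (t := η) (by linarith)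
  have hI0 := integrableOn_sq_mul_rpow hfb hcont hc (t := η) (by linarith)
  have hI2 := integrableOn_sq_mul_rpow hfb hcont hc (t := η - 2) (by linarith)
  set F := fun ρ => f' ρ * f ρ * ρ ^ η - (η - α) / 2 * (f ρ * f ρ * ρ ^ (η - 1))
  have hb1 := (hf'b.mul hfb).mul (isRpowExpBounded_rpow η)
  have hb0 := (hfb.mul hfb).mul (isRpowExpBounded_rpow (η - 1))
  have hF0 : Tendsto F (𝓝[>] 0) (𝓝 0) := by
    simpa using (hb1.tendsto_nhdsGT_zero (by linarith)).sub
      ((hb0.tendsto_nhdsGT_zero (by linarith)).const_mul ((η - α) / 2))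
  have hFtop : Tendsto F atTop (𝓝 0) := by
    simpa using (hb1.tendsto_atTop (by linarith)).sub
      ((hb0.tendsto_atTop (by linarith)).const_mul ((η - α) / 2))
  have hF : ∀ ρ ∈ Ioi 0, HasDerivAt F (f' ρ ^ 2 * ρ ^ η + f ρ ^ 2 * ρ ^ η
      - (η - α) * ((η - 1) / 2) * (f ρ ^ 2 * ρ ^ (η - 2))) ρ := by
    intro ρ (hρ : 0 < ρ)
    have hr := hasDerivAt_rpow_const (x := ρ) (p := η) (Or.inl hρ.ne')
    have hr' := hasDerivAt_rpow_const (x := ρ) (p := η - 1) (Or.inl hρ.ne')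
    refine ((((hf' ρ hρ).mul (hf ρ hρ)).mul hr).sub ((((hf ρ hρ).mul (hf ρ hρ)).mul hr').const_mul
      ((η - α) / 2))).congr_deriv ?_
    have e1 : ρ ^ (η - 1) = ρ ^ η / ρ := rpow_sub_one hρ.ne' η
    have e2 : ρ ^ (η - 2) = ρ ^ η / ρ / ρ := by
      rw [show η - 2 = η - 1 - 1 by ring, rpow_sub_one hρ.ne', e1]
    simp only [Pi.mul_apply, show η - 1 - 1 = η - 2 by ring, e1, e2]
    field_simp
    ring
  have hI10 : IntegrableOn (fun ρ => f' ρ ^ 2 * ρ ^ η + f ρ ^ 2 * ρ ^ η) (Ioi 0) := hI1.add hI0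
  have := integral_Ioi_of_hasDerivAt_of_tendsto_nhdsGT hF (hI10.sub (hI2.const_mul _)) hF0 hFtop
  rw [integral_sub hI10 (hI2.const_mul _), integral_add hI1 hI0, integral_const_mul] at this
  linarith

theorem integral_sq_mul_rpow_of_ode
    (hf : ∀ ρ ∈ Ioi 0, HasDerivAt f (f' ρ) ρ)
    (hf' : ∀ ρ ∈ Ioi 0, HasDerivAt f' (f ρ - α / ρ * f' ρ) ρ)
    (hfb : IsRpowExpBounded f a c) (hf'b : IsRpowExpBounded f' (a - 1) c) (hc : 0 < c)
    (hη : 1 - 2 * a < η) (hα₀ : 0 ≤ α) (hα : α < (η + 1) / 2) :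
    ∫ ρ in Ioi 0, f ρ ^ 2 * ρ ^ η =
      (η - α) * ((η - 1) / 2) * (1 + (η + 1) / 2 * ((η + 1) / 2 - α)⁻¹)⁻¹ *
        ∫ ρ in Ioi 0, f ρ ^ 2 * ρ ^ (η - 2) := by
  have hA := integral_deriv_sq_mul_rpow_of_ode hf hf' hfb hf'b hc hη
  have hB := integral_sq_mul_rpow_sub_two_of_ode hf hf' hfb hf'b hc hη
  set I₁ := ∫ ρ in Ioi 0, f' ρ ^ 2 * ρ ^ η
  set I₀ := ∫ ρ in Ioi 0, f ρ ^ 2 * ρ ^ η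
  have ha : 0 < (η + 1) / 2 - α := by linarith
  set D := 1 + (η + 1) / 2 * ((η + 1) / 2 - α)⁻¹
  have hD : D ≠ 0 := (add_pos one_pos (mul_pos (by linarith) (inv_pos.2 ha))).ne'
  have hI₁ : I₁ = (η + 1) / 2 * ((η + 1) / 2 - α)⁻¹ * I₀ := by
    rw [mul_comm _ _⁻¹, mul_assoc, ← hA, inv_mul_cancel_left₀ ha.ne']
  calc I₀ = D⁻¹ * (I₁ + I₀) := by
        rw [hI₁, show _ * I₀ + I₀ = D * I₀ by ring, inv_mul_cancel_left₀ hD]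
    _ = _ := by rw [hB]; ring

end RadialIdentities

theorem stmt_9_general (n : ℕ) (γ η : ℝ) (hγ0 : 0 < γ) (hη : 4 * γ + 1 < η) :
    IntegrableOn (fun ρ => (deriv (psiK n γ) ρ) ^ 2 * ρ ^ η) (Set.Ioi 0) volume ∧
    IntegrableOn (fun ρ => (psiK n γ ρ) ^ 2 * ρ ^ η) (Set.Ioi 0) volume ∧
    IntegrableOn (fun ρ => (psiK n γ ρ) ^ 2 * ρ ^ (η - 2)) (Set.Ioi 0) volume ∧
    ((η + 1) / 2 - (1 + 2 * γ)) *
        (∫ ρ in Set.Ioi (0 : ℝ), (deriv (psiK n γ) ρ) ^ 2 * ρ ^ η) =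
      ((η + 1) / 2) * (∫ ρ in Set.Ioi (0 : ℝ), (psiK n γ ρ) ^ 2 * ρ ^ η) ∧
    (∫ ρ in Set.Ioi (0 : ℝ), (psiK n γ ρ) ^ 2 * ρ ^ η) =
      (η - (1 + 2 * γ)) * ((η - 1) / 2) *
        (1 + ((η + 1) / 2) * ((η + 1) / 2 - (1 + 2 * γ))⁻¹)⁻¹ *
        (∫ ρ in Set.Ioi (0 : ℝ), (psiK n γ ρ) ^ 2 * ρ ^ (η - 2)) := by
  have hψ (ρ : ℝ) (hρ : ρ ∈ Ioi 0) := hasDerivAt_psiK n hγ0 hρ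
  have hψ' (ρ : ℝ) (hρ : ρ ∈ Ioi 0) := hasDerivAt_psiKDeriv n hγ0 hρ
  have hb := isRpowExpBounded_psiK n hγ0
  have hb' := isRpowExpBounded_psiKDeriv n hγ0
  have hη' : 1 - 2 * -(2 * γ) < η := by linarith
  have hcont : ContinuousOn (psiK n γ) (Ioi 0) := fun ρ hρ =>
    (hψ ρ hρ).continuousAt.continuousWithinAt
  have hcont' : ContinuousOn (psiKDeriv n γ) (Ioi 0) := fun ρ hρ =>
    (hψ' ρ hρ).continuousAt.continuousWithinAt
  have hderiv : EqOn (fun ρ => deriv (psiK n γ) ρ ^ 2 * ρ ^ η)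
      (fun ρ => psiKDeriv n γ ρ ^ 2 * ρ ^ η) (Ioi 0) := fun ρ hρ => by
    simp only [(hψ ρ hρ).deriv]
  rw [setIntegral_congr_fun measurableSet_Ioi hderiv,
    integrableOn_congr_fun hderiv measurableSet_Ioi]
  exact ⟨integrableOn_sq_mul_rpow hb' hcont' one_half_pos (by linarith),
    integrableOn_sq_mul_rpow hb hcont one_half_pos (by linarith),
    integrableOn_sq_mul_rpow hb hcont one_half_pos (by linarith),
    integral_deriv_sq_mul_rpow_of_ode hψ hψ' hb hb' one_half_pos hη',
    integral_sq_mul_rpow_of_ode hψ hψ' hb hb' one_half_pos hη' (by positivity) (by linarith)⟩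

theorem stmt_9 (n : ℕ) (γ η : ℝ) (hγ0 : 0 < γ) (hγ1 : γ < 1) (hn : 2 * γ < (n : ℝ))
    (hη : 4 * γ + 1 < η) :
    IntegrableOn (fun ρ => (deriv (psiK n γ) ρ) ^ 2 * ρ ^ η) (Set.Ioi 0) volume ∧
    IntegrableOn (fun ρ => (psiK n γ ρ) ^ 2 * ρ ^ η) (Set.Ioi 0) volume ∧
    IntegrableOn (fun ρ => (psiK n γ ρ) ^ 2 * ρ ^ (η - 2)) (Set.Ioi 0) volume ∧
    ((η + 1) / 2 - (1 + 2 * γ)) *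
        (∫ ρ in Set.Ioi (0 : ℝ), (deriv (psiK n γ) ρ) ^ 2 * ρ ^ η) =
      ((η + 1) / 2) * (∫ ρ in Set.Ioi (0 : ℝ), (psiK n γ ρ) ^ 2 * ρ ^ η) ∧
    (∫ ρ in Set.Ioi (0 : ℝ), (psiK n γ ρ) ^ 2 * ρ ^ η) =
      (η - (1 + 2 * γ)) * ((η - 1) / 2) *
        (1 + ((η + 1) / 2) * ((η + 1) / 2 - (1 + 2 * γ))⁻¹)⁻¹ *
        (∫ ρ in Set.Ioi (0 : ℝ), (psiK n γ ρ) ^ 2 * ρ ^ (η - 2)) :=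
  stmt_9_general n γ η hγ0 hη

end
end

section
/- For every τ = (τ¹,…,τⁿ) ∈ ℝⁿ and every integer t with 0 ≤ t ≤ 4, one has Σ_{i,j,k,l=1}^n W_{ikjl} ∫_{S^{n-1}} x^i x^j (x^k + τ^k)(x^l + τ^l) (x̄ · τ)^t dS = 0. -/
open MeasureTheory Real Filter Topology

noncomputable section

/-- The tensor `H_{ij}(x̄) = Σ_{k,l} W_{ikjl} x^k x^l`. -/
def Hten (n : ℕ) (W4 : Fin n → Fin n → Fin n → Fin n → ℝ) (i j : Fin n)
    (x : EuclideanSpace ℝ (Fin n)) : ℝ :=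
  ∑ k, ∑ l, W4 i k j l * x k * x l

/-- The squared tensor norm `|W|² = Σ (W_{ikjl} + W_{iljk})²`. -/
def normWsq (n : ℕ) (W4 : Fin n → Fin n → Fin n → Fin n → ℝ) : ℝ :=
  ∑ i, ∑ j, ∑ k, ∑ l, (W4 i k j l + W4 i l j k) ^ 2

/-- The symmetric two-tensor `W̃_{ij} = Σ_{k,p,q}(W_{ikpq}+W_{kqip})(W_{jkpq}+W_{kqjp})`. -/
def Wtil (n : ℕ) (W4 : Fin n → Fin n → Fin n → Fin n → ℝ) (i j : Fin n) : ℝ :=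
  ∑ k, ∑ p, ∑ q, (W4 i k p q + W4 k q i p) * (W4 j k p q + W4 k q j p)

/-- The partial derivative `∂_k f`. -/
def pd (n : ℕ) (k : Fin n) (f : EuclideanSpace ℝ (Fin n) → ℝ) :
    EuclideanSpace ℝ (Fin n) → ℝ :=
  fun x => fderiv ℝ f x (EuclideanSpace.single k 1)

/-- The Euclidean Laplacian `Δf = Σ_k ∂_k∂_k f`. -/
def lapl (n : ℕ) (f : EuclideanSpace ℝ (Fin n) → ℝ) :
    EuclideanSpace ℝ (Fin n) → ℝ :=
  fun x => ∑ k, pd n k (pd n k f) x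

/-- The tensor `h̄_{ij}(x̄) = f(|x̄|²) H_{ij}(x̄)`. -/
def hbar (n : ℕ) (W4 : Fin n → Fin n → Fin n → Fin n → ℝ) (f : Polynomial ℝ)
    (i j : Fin n) (x : EuclideanSpace ℝ (Fin n)) : ℝ :=
  Polynomial.eval (‖x‖ ^ 2) f * Hten n W4 i j x

/-!
The cross terms of `(x^k + τ^k)(x^l + τ^l)` cancel against the antisymmetries of `W`, leaving
`∫ H_{ij}(τ) x^i x^j (x̄ · τ)^t dS`, where `H(τ)` is trace free and `H(τ)(τ, τ) = 0`. In an
orthonormal frame whose first vector is `τ / |τ|`, reflections and transpositions of coordinates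
kill the off-diagonal moments `∫ y^p y^q (y^1)^t dS` and make the diagonal ones with `p ≠ 1` equal,
so the integral is a multiple of `tr H(τ) - H(τ)(τ, τ) / |τ|² = 0`.

All integrals involved exist because the unit sphere, covered by `2n` Lipschitz images of a ball of
`ℝ^{n-1}` (radial projections of the faces of a cube), has finite `(n-1)`-dimensional Hausdorff
measure.
-/

open MeasureTheory Metric
open scoped ENNReal NNReal InnerProductSpace

theorem sum_sum_eq_zero_of_antisymm {ι M : Type*} [Fintype ι] [AddCommGroup M]
    [IsAddTorsionFree M] {f : ι → ι → M} (hf : ∀ i j, f i j = -f j i) :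
    ∑ i, ∑ j, f i j = 0 := by
  refine self_eq_neg.1 ?_
  calc ∑ i, ∑ j, f i j = ∑ j, ∑ i, f i j := Finset.sum_comm
    _ = ∑ j, ∑ i, -f j i := Finset.sum_congr rfl fun j _ => Finset.sum_congr rfl fun i _ => hf i j
    _ = -∑ i, ∑ j, f i j := by simp only [Finset.sum_neg_distrib]

theorem sum_mul_eq_zero_of_const_off {ι R : Type*} [Fintype ι] [NonUnitalNonAssocSemiring R]
    {M J : ι → R} (a : ι) (hM : ∑ p, M p = 0) (hMa : M a = 0)
    (hJ : ∀ p q, p ≠ a → q ≠ a → J p = J q) : ∑ p, M p * J p = 0 := by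
  by_cases h : ∃ q, q ≠ a
  · obtain ⟨q, hq⟩ := h
    calc ∑ p, M p * J p = ∑ p, M p * J q := by
          refine Finset.sum_congr rfl fun p _ => ?_
          rcases eq_or_ne p a with rfl | hp
          · simp [hMa]
          · rw [hJ p q hp hq]
      _ = 0 := by rw [← Finset.sum_mul, hM, zero_mul]
  · push Not at h
    exact Finset.sum_eq_zero fun p _ => by simp [h p, hMa]

theorem exists_orthonormalBasis_apply_zero_eq {E : Type*} [NormedAddCommGroup E]
    [InnerProductSpace ℝ E] [FiniteDimensional ℝ E] {n : ℕ} [NeZero n]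
    (hE : Module.finrank ℝ E = n) {u : E} (hu : ‖u‖ = 1) :
    ∃ b : OrthonormalBasis (Fin n) ℝ E, b 0 = u := by
  obtain ⟨b, hb⟩ := Orthonormal.exists_orthonormalBasis_extension_of_card_eq (𝕜 := ℝ)
    (v := fun _ => u) (s := {(0 : Fin n)}) (by simp [hE])
    ⟨fun _ => hu, fun i j hij => (hij (Subsingleton.elim i j)).elim⟩
  exact ⟨b, hb 0 rfl⟩

theorem lipschitzOnWith_normalize {V : Type*} [NormedAddCommGroup V] [NormedSpace ℝ V] :
    LipschitzOnWith 2 (NormedSpace.normalize : V → V) {x | 1 ≤ ‖x‖} := by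
  refine LipschitzOnWith.of_dist_le_mul fun x (hx : 1 ≤ ‖x‖) y (hy : 1 ≤ ‖y‖) => ?_
  have hx0 : 0 < ‖x‖ := one_pos.trans_le hx
  have hy0 : 0 < ‖y‖ := one_pos.trans_le hy
  have hsplit : NormedSpace.normalize x - NormedSpace.normalize y =
      ‖x‖⁻¹ • (x - y) + (‖x‖⁻¹ - ‖y‖⁻¹) • y := by
    simp only [NormedSpace.normalize, smul_sub, sub_smul]; abel
  have hcoef : |‖x‖⁻¹ - ‖y‖⁻¹| * ‖y‖ = ‖x‖⁻¹ * |‖y‖ - ‖x‖| := by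
    rw [inv_sub_inv hx0.ne' hy0.ne', abs_div, abs_of_pos (mul_pos hx0 hy0)]
    field_simp
  rw [dist_eq_norm, dist_eq_norm, hsplit, NNReal.coe_ofNat]
  calc ‖‖x‖⁻¹ • (x - y) + (‖x‖⁻¹ - ‖y‖⁻¹) • y‖
      ≤ ‖x‖⁻¹ * ‖x - y‖ + |‖x‖⁻¹ - ‖y‖⁻¹| * ‖y‖ := by
        refine (norm_add_le _ _).trans_eq ?_
        rw [norm_smul, norm_smul, Real.norm_of_nonneg (inv_nonneg.2 hx0.le), Real.norm_eq_abs]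
    _ ≤ ‖x‖⁻¹ * (2 * ‖x - y‖) := by
        rw [hcoef, two_mul, mul_add]
        gcongr
        rw [norm_sub_rev]
        exact abs_norm_sub_norm_le y x
    _ ≤ 2 * ‖x - y‖ := mul_le_of_le_one_left (by positivity) (inv_le_one_of_one_le₀ hx)

namespace EuclideanSpace

variable {n : ℕ}

def insertCoord (m : Fin (n + 1)) (s : ℝ) (y : EuclideanSpace ℝ (Fin n)) :
    EuclideanSpace ℝ (Fin (n + 1)) :=
  WithLp.toLp 2 (m.insertNth s y.ofLp)

theorem isometry_insertCoord (m : Fin (n + 1)) (s : ℝ) : Isometry (insertCoord m s) := by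
  refine Isometry.of_dist_eq fun y z => ?_
  simp [EuclideanSpace.dist_eq, insertCoord, Fin.sum_univ_succAbove _ m]

theorem one_le_norm_insertCoord (m : Fin (n + 1)) {s : ℝ} (hs : |s| = 1)
    (y : EuclideanSpace ℝ (Fin n)) : 1 ≤ ‖insertCoord m s y‖ := by
  simpa [insertCoord, hs] using PiLp.norm_apply_le (insertCoord m s y) m

def negCoord (r : Fin n) : EuclideanSpace ℝ (Fin n) ≃ₗᵢ[ℝ] EuclideanSpace ℝ (Fin n) :=
  LinearIsometryEquiv.piLpCongrRight 2 fun i =>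
    if i = r then LinearIsometryEquiv.neg ℝ else LinearIsometryEquiv.refl ℝ ℝ

@[simp] theorem negCoord_apply (r : Fin n) (x : EuclideanSpace ℝ (Fin n)) (i : Fin n) :
    negCoord r x i = if i = r then -x i else x i := by
  by_cases h : i = r <;> simp [negCoord, h]

def swapCoord (p q : Fin n) : EuclideanSpace ℝ (Fin n) ≃ₗᵢ[ℝ] EuclideanSpace ℝ (Fin n) :=
  LinearIsometryEquiv.piLpCongrLeft 2 ℝ ℝ (Equiv.swap p q)

@[simp] theorem swapCoord_apply (p q : Fin n) (x : EuclideanSpace ℝ (Fin n)) (i : Fin n) :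
    swapCoord p q x i = x (Equiv.swap p q i) := by
  simp [swapCoord, Equiv.piCongrLeft'_apply, Equiv.symm_swap]

end EuclideanSpace

open EuclideanSpace

theorem sphere_subset_iUnion_image_insertCoord (N : ℕ) :
    sphere (0 : EuclideanSpace ℝ (Fin (N + 1))) 1 ⊆
      ⋃ m, ⋃ s ∈ ({-1, 1} : Set ℝ),
        (NormedSpace.normalize ∘ insertCoord m s) '' closedBall 0 √N := by
  intro x hx
  have hx1 : ‖x‖ = 1 := by simpa using hx
  obtain ⟨m, -, hm⟩ := Finset.univ.exists_max_image (fun i => |x i|) Finset.univ_nonempty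
  set c := |x m|
  have hc : 0 < c := by
    refine (abs_nonneg _).lt_of_ne fun h => ?_
    have : x = 0 := by
      ext i; exact abs_nonpos_iff.1 (h ▸ hm i (Finset.mem_univ i))
    simp [this] at hx1
  set y : EuclideanSpace ℝ (Fin N) := WithLp.toLp 2 fun j => x (m.succAbove j) / c
  have hy : ‖y‖ ≤ √N := by
    rw [EuclideanSpace.norm_eq]
    refine Real.sqrt_le_sqrt ?_
    calc ∑ j, ‖y j‖ ^ 2 ≤ ∑ _j : Fin N, (1 : ℝ) := by
          gcongr with j
          rw [Real.norm_eq_abs, abs_div, abs_of_pos hc]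
          exact pow_le_one₀ (by positivity) (div_le_one_of_le₀ (hm _ (Finset.mem_univ _)) hc.le)
      _ = N := by simp
  have hins : insertCoord m (x m / c) y = c⁻¹ • x := by
    ext i
    induction i using Fin.succAboveCases m with
    | x => simp [insertCoord, div_eq_inv_mul]
    | p j => simp [insertCoord, y, div_eq_inv_mul]
  refine Set.mem_iUnion.2 ⟨m, Set.mem_iUnion₂.2 ⟨x m / c, ?_, y, mem_closedBall_zero_iff.2 hy, ?_⟩⟩
  · have hxm : x m ≠ 0 := abs_pos.1 hc
    rcases abs_cases (x m) with ⟨h, -⟩ | ⟨h, -⟩ <;> simp [c, h, div_neg, div_self hxm]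
  · rw [Function.comp_apply, hins, NormedSpace.normalize_smul_of_pos (inv_pos.2 hc),
      NormedSpace.normalize_eq_self_of_norm_eq_one hx1]

theorem hausdorffMeasure_sphere_lt_top (N : ℕ) :
    μH[N] (sphere (0 : EuclideanSpace ℝ (Fin (N + 1))) 1) < ∞ := by
  have hK : μH[N] (closedBall (0 : EuclideanSpace ℝ (Fin N)) √N) < ∞ :=
    (isCompact_closedBall _ _).measure_lt_top
  refine (measure_mono (sphere_subset_iUnion_image_insertCoord N)).trans_lt <|
    (measure_iUnion_fintype_le _ _).trans_lt <| ENNReal.sum_lt_top.2 fun m _ =>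
      measure_biUnion_lt_top (Set.toFinite _) fun s hs => ?_
  have hs1 : |s| = 1 := by rcases hs with rfl | rfl <;> simp
  have hlip : LipschitzOnWith (2 * 1) (NormedSpace.normalize ∘ insertCoord m s)
      (closedBall 0 √N) :=
    lipschitzOnWith_normalize.comp (isometry_insertCoord m s).lipschitz.lipschitzOnWith
      fun y _ => one_le_norm_insertCoord m hs1 y
  refine (hlip.hausdorffMeasure_image_le (Nat.cast_nonneg N)).trans_lt ?_
  exact ENNReal.mul_lt_top (by simp) hK

theorem hausdorffMeasure_sphere_ne_top (n : ℕ) :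
    μH[(n : ℝ) - 1] (sphere (0 : EuclideanSpace ℝ (Fin n)) 1) ≠ ∞ := by
  cases n with
  | zero => simp [sphere_eq_empty_of_subsingleton]
  | succ N => simpa using (hausdorffMeasure_sphere_lt_top N).ne

theorem setIntegral_sphere_comp_linearIsometryEquiv {E F : Type*} [NormedAddCommGroup E]
    [NormedSpace ℝ E] [MeasurableSpace E] [BorelSpace E] [NormedAddCommGroup F] [NormedSpace ℝ F]
    (d : ℝ) (e : E ≃ₗᵢ[ℝ] E) (f : E → F) :
    ∫ x in sphere 0 1, f (e x) ∂μH[d] = ∫ x in sphere 0 1, f x ∂μH[d] := by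
  have hpre : e ⁻¹' sphere 0 1 = sphere 0 1 := by ext x; simp
  conv_lhs => rw [← hpre]
  exact (e.toIsometryEquiv.measurePreserving_hausdorffMeasure d).setIntegral_preimage_emb
    e.toIsometryEquiv.toHomeomorph.measurableEmbedding f _

theorem integrableOn_sphere_of_continuous {E : Type*} [NormedAddCommGroup E]
    [NormedSpace ℝ E] [MeasurableSpace E] [BorelSpace E] [ProperSpace E] {d : ℝ}
    (hS : μH[d] (sphere (0 : E) 1) ≠ ∞) {f : E → ℝ} (hf : Continuous f) :
    IntegrableOn f (sphere 0 1) μH[d] := by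
  obtain ⟨C, hC⟩ := (isCompact_sphere (0 : E) 1).exists_bound_of_continuousOn hf.continuousOn
  refine Measure.integrableOn_of_bounded (M := C) hS hf.aestronglyMeasurable ?_
  filter_upwards [ae_restrict_mem isClosed_sphere.measurableSet] with x hx
  exact hC x hx

section SphereMoments

variable {n : ℕ} {d : ℝ}

theorem setIntegral_sphere_eq_zero_of_odd (r : Fin n) {f : EuclideanSpace ℝ (Fin n) → ℝ}
    (hf : ∀ x, f (negCoord r x) = -f x) : ∫ x in sphere 0 1, f x ∂μH[d] = 0 := by
  have h := setIntegral_sphere_comp_linearIsometryEquiv d (negCoord r) f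
  simp only [hf, integral_neg] at h
  linarith

theorem setIntegral_sphere_coord_mul_coord_mul_pow_eq_zero {p q : Fin n} (hpq : p ≠ q)
    (a : Fin n) (t : ℕ) :
    ∫ x in sphere (0 : EuclideanSpace ℝ (Fin n)) 1, x p * x q * x a ^ t ∂μH[d] = 0 := by
  rcases eq_or_ne p a with rfl | hpa
  · refine setIntegral_sphere_eq_zero_of_odd q fun x => ?_
    simp [hpq]
  · refine setIntegral_sphere_eq_zero_of_odd p fun x => ?_
    simp [hpq.symm, hpa.symm]

theorem setIntegral_sphere_coord_sq_mul_pow_eq {p q a : Fin n} (hp : p ≠ a) (hq : q ≠ a)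
    (t : ℕ) :
    ∫ x in sphere (0 : EuclideanSpace ℝ (Fin n)) 1, x p * x p * x a ^ t ∂μH[d] =
      ∫ x in sphere (0 : EuclideanSpace ℝ (Fin n)) 1, x q * x q * x a ^ t ∂μH[d] := by
  rw [← setIntegral_sphere_comp_linearIsometryEquiv d (swapCoord p q)]
  simp [Equiv.swap_apply_of_ne_of_ne hp.symm hq.symm]

theorem setIntegral_sphere_quadratic_mul_coord_pow_eq_zero
    (hS : μH[d] (sphere (0 : EuclideanSpace ℝ (Fin n)) 1) ≠ ∞)
    {M : Matrix (Fin n) (Fin n) ℝ} (hM : M.trace = 0) {a : Fin n} (hMa : M a a = 0) (t : ℕ) :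
    ∫ x in sphere (0 : EuclideanSpace ℝ (Fin n)) 1,
      ∑ p, ∑ q, M p q * (x p * x q * x a ^ t) ∂μH[d] = 0 := by
  have hint : ∀ p q, IntegrableOn (fun x : EuclideanSpace ℝ (Fin n) => x p * x q * x a ^ t)
      (sphere 0 1) μH[d] := fun p q => integrableOn_sphere_of_continuous hS (by fun_prop)
  calc ∫ x in sphere (0 : EuclideanSpace ℝ (Fin n)) 1,
        ∑ p, ∑ q, M p q * (x p * x q * x a ^ t) ∂μH[d]
      = ∑ p, ∑ q, M p q * ∫ x in sphere (0 : EuclideanSpace ℝ (Fin n)) 1,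
          x p * x q * x a ^ t ∂μH[d] := by
        rw [integral_finsetSum _ fun p _ => integrable_finsetSum _ fun q _ =>
          (hint p q).const_mul (M p q)]
        refine Finset.sum_congr rfl fun p _ => ?_
        rw [integral_finsetSum _ fun q _ => (hint p q).const_mul (M p q)]
        simp_rw [integral_const_mul]
    _ = ∑ p, M p p * ∫ x in sphere (0 : EuclideanSpace ℝ (Fin n)) 1,
          x p * x p * x a ^ t ∂μH[d] :=
        Finset.sum_congr rfl fun p _ => Finset.sum_eq_single p
          (fun q _ hqp => by
            rw [setIntegral_sphere_coord_mul_coord_mul_pow_eq_zero hqp.symm, mul_zero])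
          (by simp)
    _ = 0 := sum_mul_eq_zero_of_const_off a hM hMa
        fun p q hp hq => setIntegral_sphere_coord_sq_mul_pow_eq hp hq t

theorem setIntegral_sphere_inner_map_mul_inner_pow_eq_zero
    (hS : μH[d] (sphere (0 : EuclideanSpace ℝ (Fin n)) 1) ≠ ∞)
    {A : EuclideanSpace ℝ (Fin n) →ₗ[ℝ] EuclideanSpace ℝ (Fin n)}
    (hA : LinearMap.trace ℝ _ A = 0) {τ : EuclideanSpace ℝ (Fin n)} (hτ : τ ≠ 0)
    (hAτ : ⟪τ, A τ⟫_ℝ = 0) (t : ℕ) :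
    ∫ x in sphere (0 : EuclideanSpace ℝ (Fin n)) 1, ⟪x, A x⟫_ℝ * ⟪x, τ⟫_ℝ ^ t ∂μH[d] = 0 := by
  have : NeZero n := ⟨by rintro rfl; exact hτ (Subsingleton.elim _ _)⟩
  obtain ⟨b, hb⟩ := exists_orthonormalBasis_apply_zero_eq (finrank_euclideanSpace_fin (𝕜 := ℝ))
    (NormedSpace.norm_normalize_eq_one_iff.2 hτ)
  obtain ⟨c, rfl⟩ : ∃ c : ℝ, τ = c • b 0 := ⟨‖τ‖, by rw [hb, NormedSpace.norm_smul_normalize]⟩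
  have hc : c ≠ 0 := by rintro rfl; simp at hτ
  set M : Matrix (Fin n) (Fin n) ℝ := Matrix.of fun p q => ⟪b p, A (b q)⟫_ℝ
  have hM : M.trace = 0 := by rw [← hA, LinearMap.trace_eq_sum_inner A b]; rfl
  have hM0 : M 0 0 = 0 := by
    have h : ⟪c • b 0, A (c • b 0)⟫_ℝ = c ^ 2 * M 0 0 := by
      simp only [M, Matrix.of_apply, map_smul, real_inner_smul_left, real_inner_smul_right]
      ring
    rw [h] at hAτ
    exact (mul_eq_zero.1 hAτ).resolve_left (pow_ne_zero 2 hc)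
  have hexpand : ∀ y, ⟪b.repr.symm y, A (b.repr.symm y)⟫_ℝ * ⟪b.repr.symm y, c • b 0⟫_ℝ ^ t =
      c ^ t * ∑ p, ∑ q, M p q * (y p * y q * y 0 ^ t) := by
    intro y
    have hτy : ⟪b.repr.symm y, c • b 0⟫_ℝ = c * y 0 := by
      rw [inner_smul_right, real_inner_comm, ← b.repr_apply_apply,
        LinearIsometryEquiv.apply_symm_apply]
    rw [hτy, ← b.sum_repr_symm]
    simp only [map_sum, map_smul, inner_sum, sum_inner, real_inner_smul_left,
      real_inner_smul_right, M, Matrix.of_apply, mul_pow, Finset.mul_sum, Finset.sum_mul]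
    rw [Finset.sum_comm]
    ac_rfl
  rw [← setIntegral_sphere_comp_linearIsometryEquiv d b.repr.symm]
  simp_rw [hexpand, integral_const_mul,
    setIntegral_sphere_quadratic_mul_coord_pow_eq_zero hS hM hM0, mul_zero]

end SphereMoments

section WeylTensor

variable {n : ℕ} {W : Fin n → Fin n → Fin n → Fin n → ℝ}

theorem sum_weyl_mul_eq_zero_of_antisymm_left (hanti : ∀ i j k l, W i j k l = -W j i k l)
    (a c : Fin n → ℝ) : ∑ i, ∑ j, ∑ k, ∑ l, W i k j l * a i * a j * a k * c l = 0 := by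
  calc ∑ i, ∑ j, ∑ k, ∑ l, W i k j l * a i * a j * a k * c l
      = ∑ i, ∑ k, ∑ j, ∑ l, W i k j l * a i * a j * a k * c l :=
        Finset.sum_congr rfl fun i _ => Finset.sum_comm
    _ = 0 := sum_sum_eq_zero_of_antisymm fun i k => by
        simp only [← Finset.sum_neg_distrib]
        exact Finset.sum_congr rfl fun j _ => Finset.sum_congr rfl fun l _ => by
          rw [hanti i k j l]; ring

theorem sum_weyl_mul_eq_zero_of_antisymm_right (hanti : ∀ i j k l, W i j k l = -W i j l k)
    (a c : Fin n → ℝ) : ∑ i, ∑ j, ∑ k, ∑ l, W i k j l * a i * a j * c k * a l = 0 := by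
  calc ∑ i, ∑ j, ∑ k, ∑ l, W i k j l * a i * a j * c k * a l
      = ∑ i, ∑ k, ∑ j, ∑ l, W i k j l * a i * a j * c k * a l :=
        Finset.sum_congr rfl fun i _ => Finset.sum_comm
    _ = 0 := Finset.sum_eq_zero fun i _ => Finset.sum_eq_zero fun k _ =>
        sum_sum_eq_zero_of_antisymm fun j l => by rw [hanti i k j l]; ring

theorem sum_weyl_mul_add_mul_add (hanti1 : ∀ i j k l, W i j k l = -W j i k l)
    (hanti2 : ∀ i j k l, W i j k l = -W i j l k) (a b : Fin n → ℝ) :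
    ∑ i, ∑ j, ∑ k, ∑ l, W i k j l * a i * a j * (a k + b k) * (a l + b l) =
      ∑ i, ∑ j, ∑ k, ∑ l, W i k j l * a i * a j * b k * b l := by
  have hsplit : ∀ i j k l, W i k j l * a i * a j * (a k + b k) * (a l + b l) =
      W i k j l * a i * a j * a k * (a l + b l) + W i k j l * a i * a j * b k * a l +
        W i k j l * a i * a j * b k * b l := fun i j k l => by ring
  simp only [hsplit, Finset.sum_add_distrib, sum_weyl_mul_eq_zero_of_antisymm_left hanti1,
    sum_weyl_mul_eq_zero_of_antisymm_right hanti2, zero_add]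

variable (n W) in
def HtenMap (τ : EuclideanSpace ℝ (Fin n)) :
    EuclideanSpace ℝ (Fin n) →ₗ[ℝ] EuclideanSpace ℝ (Fin n) :=
  Matrix.toLpLin 2 2 (Matrix.of fun i j => Hten n W i j τ)

theorem inner_HtenMap (τ x : EuclideanSpace ℝ (Fin n)) :
    ⟪x, HtenMap n W τ x⟫_ℝ = ∑ i, ∑ j, ∑ k, ∑ l, W i k j l * x i * x j * τ k * τ l := by
  simp only [HtenMap, Hten, Matrix.toLpLin_apply, PiLp.inner_apply, Matrix.mulVec, dotProduct,
    Matrix.of_apply, Finset.sum_mul, RCLike.inner_apply, conj_trivial]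
  exact Finset.sum_congr rfl fun i _ => Finset.sum_congr rfl fun j _ =>
    Finset.sum_congr rfl fun k _ => Finset.sum_congr rfl fun l _ => by ring

theorem trace_HtenMap (htrace : ∀ j k, ∑ i, W i j i k = 0) (τ : EuclideanSpace ℝ (Fin n)) :
    LinearMap.trace ℝ _ (HtenMap n W τ) = 0 := by
  rw [HtenMap, Matrix.toLpLin_eq_toLin,
    LinearMap.trace_eq_matrix_trace ℝ (PiLp.basisFun 2 ℝ (Fin n)), LinearMap.toMatrix_toLin]
  calc ∑ i, Hten n W i i τ = ∑ k, ∑ l, (∑ i, W i k i l) * τ k * τ l := by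
        simp only [Hten, Finset.sum_mul]
        rw [Finset.sum_comm]
        exact Finset.sum_congr rfl fun k _ => Finset.sum_comm
    _ = 0 := by simp [htrace]

theorem setIntegral_sphere_inner_HtenMap_mul_inner_pow_eq_zero {d : ℝ}
    (hS : μH[d] (sphere (0 : EuclideanSpace ℝ (Fin n)) 1) ≠ ∞)
    (hanti : ∀ i j k l, W i j k l = -W j i k l) (htrace : ∀ j k, ∑ i, W i j i k = 0)
    (τ : EuclideanSpace ℝ (Fin n)) (t : ℕ) :
    ∫ x in sphere (0 : EuclideanSpace ℝ (Fin n)) 1,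
      ⟪x, HtenMap n W τ x⟫_ℝ * ⟪x, τ⟫_ℝ ^ t ∂μH[d] = 0 := by
  rcases eq_or_ne τ 0 with rfl | hτ
  · simp [inner_HtenMap]
  refine setIntegral_sphere_inner_map_mul_inner_pow_eq_zero hS (trace_HtenMap htrace τ) hτ ?_ t
  rw [inner_HtenMap]
  exact sum_weyl_mul_eq_zero_of_antisymm_left hanti _ _

end WeylTensor

theorem stmt_13_general (n : ℕ) (W4 : Fin n → Fin n → Fin n → Fin n → ℝ)
    (hanti1 : ∀ i j k l, W4 i j k l = -W4 j i k l)
    (hanti2 : ∀ i j k l, W4 i j k l = -W4 i j l k)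
    (htrace : ∀ j k, ∑ i, W4 i j i k = 0) :
    ∀ τ : EuclideanSpace ℝ (Fin n), ∀ t : ℕ, t ≤ 4 →
      (∑ i, ∑ j, ∑ k, ∑ l, W4 i k j l *
        ∫ x in Metric.sphere (0 : EuclideanSpace ℝ (Fin n)) 1,
          x i * x j * (x k + τ k) * (x l + τ l) * (∑ i', x i' * τ i') ^ t
            ∂μH[(n : ℝ) - 1]) = 0 := by
  intro τ t _
  have hS := hausdorffMeasure_sphere_ne_top n
  have hint : ∀ g : EuclideanSpace ℝ (Fin n) → ℝ, Continuous g →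
      Integrable g (μH[(n : ℝ) - 1].restrict (sphere 0 1)) :=
    fun g hg => integrableOn_sphere_of_continuous hS hg
  have hintegrand : ∀ x : EuclideanSpace ℝ (Fin n),
      ⟪x, HtenMap n W4 τ x⟫_ℝ * ⟪x, τ⟫_ℝ ^ t = ∑ i, ∑ j, ∑ k, ∑ l, W4 i k j l *
        (x i * x j * (x k + τ k) * (x l + τ l) * (∑ i', x i' * τ i') ^ t) := fun x => by
    rw [inner_HtenMap, ← sum_weyl_mul_add_mul_add hanti1 hanti2, ← real_inner_comm x τ]
    simp only [PiLp.inner_apply, RCLike.inner_apply, conj_trivial, Finset.sum_mul]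
    exact Finset.sum_congr rfl fun i _ => Finset.sum_congr rfl fun j _ =>
      Finset.sum_congr rfl fun k _ => Finset.sum_congr rfl fun l _ => by ring
  refine Eq.trans ?_ (setIntegral_sphere_inner_HtenMap_mul_inner_pow_eq_zero hS hanti1 htrace τ t)
  simp_rw [hintegrand]
  simp (disch := exact fun _ _ => hint _ (by fun_prop)) only [integral_finsetSum,
    integral_const_mul]

theorem stmt_13 (n : ℕ) (hn : 2 ≤ n) (W4 : Fin n → Fin n → Fin n → Fin n → ℝ)
    (hanti1 : ∀ i j k l, W4 i j k l = -W4 j i k l)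
    (hanti2 : ∀ i j k l, W4 i j k l = -W4 i j l k)
    (hsymm : ∀ i j k l, W4 i j k l = W4 k l i j)
    (hbianchi : ∀ i j k l, W4 i j k l + W4 i k l j + W4 i l j k = 0)
    (htrace : ∀ j k, ∑ i, W4 i j i k = 0) :
    ∀ τ : EuclideanSpace ℝ (Fin n), ∀ t : ℕ, t ≤ 4 →
      (∑ i, ∑ j, ∑ k, ∑ l, W4 i k j l *
        ∫ x in Metric.sphere (0 : EuclideanSpace ℝ (Fin n)) 1,
          x i * x j * (x k + τ k) * (x l + τ l) * (∑ i', x i' * τ i') ^ t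
            ∂μH[(n : ℝ) - 1]) = 0 :=
  stmt_13_general n W4 hanti1 hanti2 htrace

end
end

section
/- For every x̄ ∈ ℝⁿ, writing r = |x̄|, Σ_{i,j,k=1}^n (∂_k h̄_{ij}(x̄))² = f(r²)² Σ_{i,j,k=1}^n (∂_k H_{ij}(x̄))² + (8 f(r²) f'(r²) + 4 r² f'(r²)²) Σ_{i,j=1}^n H_{ij}(x̄)². -/
/-! With `F = f(r²)` and `F' = f'(r²)`, the product rule gives `∂ₖh̄ᵢⱼ = F ∂ₖHᵢⱼ + 2F' xᵏ Hᵢⱼ`.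
Squaring and summing over `k`, the cross term contains `Σₖ xᵏ ∂ₖHᵢⱼ`, which is `2Hᵢⱼ` by Euler's
identity since `Hᵢⱼ` is homogeneous of degree 2, and the last term contains `Σₖ (xᵏ)² = r²`. -/

open MeasureTheory Real Filter Topology

noncomputable section

theorem fderiv_apply_self_of_homogeneous {E : Type*} [NormedAddCommGroup E] [NormedSpace ℝ E]
    {g : E → ℝ} {x : E} (k : ℕ) (hg : DifferentiableAt ℝ g x)
    (hom : ∀ t : ℝ, g (t • x) = t ^ k * g x) :
    fderiv ℝ g x x = k * g x := by
  have hline : HasDerivAt (fun t : ℝ => g (t • x)) (fderiv ℝ g x x) 1 := by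
    have hsmul : HasDerivAt (fun t : ℝ => t • x) x 1 := by
      simpa using (hasDerivAt_id (1 : ℝ)).smul_const x
    have hg1 : HasFDerivAt g (fderiv ℝ g x) ((1 : ℝ) • x) := by
      rw [one_smul]; exact hg.hasFDerivAt
    exact hg1.comp_hasDerivAt 1 hsmul
  have hpow : HasDerivAt (fun t : ℝ => t ^ k * g x) (k * g x) 1 := by
    simpa using (hasDerivAt_pow k (1 : ℝ)).mul_const (g x)
  exact hline.unique (by simpa only [hom] using hpow)

theorem sum_coord_mul_apply_single {ι : Type*} [Fintype ι] [DecidableEq ι]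
    (L : EuclideanSpace ℝ ι →L[ℝ] ℝ) (x : EuclideanSpace ℝ ι) :
    ∑ m, x m * L (EuclideanSpace.single m 1) = L x := by
  conv_rhs => rw [← (EuclideanSpace.basisFun ι ℝ).sum_repr x]
  simp only [EuclideanSpace.basisFun_repr, EuclideanSpace.basisFun_apply, map_sum, map_smul,
    smul_eq_mul]

theorem Hten_smul (n : ℕ) (W4 : Fin n → Fin n → Fin n → Fin n → ℝ) (i j : Fin n)
    (t : ℝ) (x : EuclideanSpace ℝ (Fin n)) :
    Hten n W4 i j (t • x) = t ^ 2 * Hten n W4 i j x := by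
  simp only [Hten, PiLp.smul_apply, smul_eq_mul, Finset.mul_sum]
  exact Finset.sum_congr rfl fun _ _ => Finset.sum_congr rfl fun _ _ => by ring

theorem differentiable_Hten (n : ℕ) (W4 : Fin n → Fin n → Fin n → Fin n → ℝ) (i j : Fin n) :
    Differentiable ℝ (Hten n W4 i j) := by
  unfold Hten
  fun_prop

theorem pd_radial_mul {n : ℕ} (f : Polynomial ℝ) {g : EuclideanSpace ℝ (Fin n) → ℝ}
    {x : EuclideanSpace ℝ (Fin n)} (hg : DifferentiableAt ℝ g x) (m : Fin n) :
    pd n m (fun y => Polynomial.eval (‖y‖ ^ 2) f * g y) x =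
      Polynomial.eval (‖x‖ ^ 2) f * pd n m g x +
        2 * Polynomial.eval (‖x‖ ^ 2) f.derivative * x m * g x := by
  have hradial := (f.hasDerivAt (‖x‖ ^ 2)).comp_hasFDerivAt x
    (hasStrictFDerivAt_norm_sq x).hasFDerivAt
  have hprod : HasFDerivAt (fun y => Polynomial.eval (‖y‖ ^ 2) f * g y) _ x :=
    hradial.mul hg.hasFDerivAt
  rw [pd, hprod.fderiv, pd]
  simp only [add_apply, smul_apply, smul_eq_mul, nsmul_eq_mul, innerSL_apply_apply,
    EuclideanSpace.inner_single_right, conj_trivial, Function.comp_apply]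
  ring

theorem sum_sq_pd_radial_mul {n : ℕ} (f : Polynomial ℝ) {g : EuclideanSpace ℝ (Fin n) → ℝ}
    {x : EuclideanSpace ℝ (Fin n)} (hg : DifferentiableAt ℝ g x)
    (hom : ∀ t : ℝ, g (t • x) = t ^ 2 * g x) :
    ∑ m, (pd n m (fun y => Polynomial.eval (‖y‖ ^ 2) f * g y) x) ^ 2 =
      Polynomial.eval (‖x‖ ^ 2) f ^ 2 * ∑ m, (pd n m g x) ^ 2 +
        (8 * Polynomial.eval (‖x‖ ^ 2) f * Polynomial.eval (‖x‖ ^ 2) f.derivative +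
          4 * ‖x‖ ^ 2 * Polynomial.eval (‖x‖ ^ 2) f.derivative ^ 2) * g x ^ 2 := by
  set F := Polynomial.eval (‖x‖ ^ 2) f
  set F' := Polynomial.eval (‖x‖ ^ 2) f.derivative
  have euler : ∑ m, x m * pd n m g x = 2 * g x := by
    simpa only [pd, sum_coord_mul_apply_single, Nat.cast_ofNat] using
      fderiv_apply_self_of_homogeneous 2 hg hom
  have norm_sq : ∑ m, x m ^ 2 = ‖x‖ ^ 2 := by
    simp only [EuclideanSpace.norm_sq_eq, Real.norm_eq_abs, sq_abs]
  calc ∑ m, (pd n m (fun y => Polynomial.eval (‖y‖ ^ 2) f * g y) x) ^ 2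
      = ∑ m, (F ^ 2 * pd n m g x ^ 2 + 4 * F * F' * g x * (x m * pd n m g x)
          + 4 * F' ^ 2 * g x ^ 2 * x m ^ 2) := by
        refine Finset.sum_congr rfl fun m _ => ?_
        rw [pd_radial_mul f hg]
        ring
    _ = F ^ 2 * ∑ m, pd n m g x ^ 2 + 4 * F * F' * g x * ∑ m, x m * pd n m g x
          + 4 * F' ^ 2 * g x ^ 2 * ∑ m, x m ^ 2 := by
        simp only [Finset.sum_add_distrib, Finset.mul_sum]
    _ = _ := by
        rw [euler, norm_sq]
        ring

theorem stmt_14_general (n : ℕ) (W4 : Fin n → Fin n → Fin n → Fin n → ℝ)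
    (f : Polynomial ℝ) :
    ∀ x : EuclideanSpace ℝ (Fin n),
      (∑ i, ∑ j, ∑ k, (pd n k (hbar n W4 f i j) x) ^ 2) =
        Polynomial.eval (‖x‖ ^ 2) f ^ 2 *
            (∑ i, ∑ j, ∑ k, (pd n k (Hten n W4 i j) x) ^ 2) +
          (8 * Polynomial.eval (‖x‖ ^ 2) f * Polynomial.eval (‖x‖ ^ 2) f.derivative +
              4 * ‖x‖ ^ 2 * Polynomial.eval (‖x‖ ^ 2) f.derivative ^ 2) *
            (∑ i, ∑ j, (Hten n W4 i j x) ^ 2) := by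
  intro x
  have hcomponent (i j : Fin n) := sum_sq_pd_radial_mul f
    ((differentiable_Hten n W4 i j).differentiableAt (x := x)) (Hten_smul n W4 i j · x)
  unfold hbar
  simp only [hcomponent, Finset.sum_add_distrib, Finset.mul_sum]

theorem stmt_14 (n : ℕ) (hn : 2 ≤ n) (W4 : Fin n → Fin n → Fin n → Fin n → ℝ)
    (hanti1 : ∀ i j k l, W4 i j k l = -W4 j i k l)
    (hanti2 : ∀ i j k l, W4 i j k l = -W4 i j l k)
    (hsymm : ∀ i j k l, W4 i j k l = W4 k l i j)
    (hbianchi : ∀ i j k l, W4 i j k l + W4 i k l j + W4 i l j k = 0)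
    (htrace : ∀ j k, ∑ i, W4 i j i k = 0)
    (f : Polynomial ℝ) :
    ∀ x : EuclideanSpace ℝ (Fin n),
      (∑ i, ∑ j, ∑ k, (pd n k (hbar n W4 f i j) x) ^ 2) =
        Polynomial.eval (‖x‖ ^ 2) f ^ 2 *
            (∑ i, ∑ j, ∑ k, (pd n k (Hten n W4 i j) x) ^ 2) +
          (8 * Polynomial.eval (‖x‖ ^ 2) f * Polynomial.eval (‖x‖ ^ 2) f.derivative +
              4 * ‖x‖ ^ 2 * Polynomial.eval (‖x‖ ^ 2) f.derivative ^ 2) *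
            (∑ i, ∑ j, (Hten n W4 i j x) ^ 2) :=
  stmt_14_general n W4 f

end
end
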